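/- arXiv:1503.03253 — 2 statements merged into one kernel-verified Lean document; each statement's English description precedes it below -/
import Mathlib

section
/- For a fixed integer r ≥ 0 and α = (α_0, ..., α_r) with all α_i ≥ 0, if ψ_j(α) < ψ_{j+1}(α) for some j ≥ 0 (with j+1 ≤ r), then ψ_j(α) < ψ_{j+1}(α) < ψ_{j+2}(α) < ... < ψ_r(α), i.e., the sequence is strictly increasing from index j onward. -/
/-! By Pascal's rule the increments `ψ_{k+1} - ψ_k = Σ_{i<r} C(k,i) α_{i+1}` are nondecreasing
in `k` when `α ≥ 0`, so `ψ` is convex in `k`: once an increment is positive, all later ones are. -/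

/-- `ψ_k(α) = Σ_{i=0}^r C(k,i) α_i` (with `C(k,i)=0` for `i>k`). -/
noncomputable def psi (r : ℕ) (α : ℕ → ℝ) (k : ℕ) : ℝ :=
  ∑ i ∈ Finset.range (r + 1), (k.choose i : ℝ) * α i

lemma strictMonoOn_Ici_of_monotone_sub {β : Type*} [AddCommGroup β] [PartialOrder β]
    [IsOrderedAddMonoid β] {f : ℕ → β} (hf : Monotone fun k ↦ f (k + 1) - f k) {j : ℕ}
    (hj : f j < f (j + 1)) : StrictMonoOn f (Set.Ici j) := by
  refine strictMonoOn_of_lt_add_one Set.ordConnected_Ici fun k _ hk _ ↦ ?_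
  have hpos : 0 < f (j + 1) - f j := sub_pos.mpr hj
  exact sub_pos.mp (hpos.trans_le (hf hk))

lemma psi_succ_sub (r : ℕ) (α : ℕ → ℝ) (k : ℕ) :
    psi r α (k + 1) - psi r α k = ∑ i ∈ Finset.range r, (k.choose i : ℝ) * α (i + 1) := by
  simp only [psi, Finset.sum_range_succ' _ r, Nat.choose_succ_succ', Nat.cast_add, add_mul,
    Finset.sum_add_distrib, Nat.choose_zero_right]
  ring

lemma monotone_psi_succ_sub (r : ℕ) {α : ℕ → ℝ} (hα : ∀ i, 0 ≤ α i) :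
    Monotone fun k ↦ psi r α (k + 1) - psi r α k := by
  intro k l hkl
  simp only [psi_succ_sub]
  gcongr with i
  exact hα _

theorem psi_strict_from_general (r : ℕ) (α : ℕ → ℝ) (hα : ∀ i, 0 ≤ α i)
    (j : ℕ) (h : psi r α j < psi r α (j + 1)) :
    ∀ a b : ℕ, j ≤ a → a < b → b ≤ r → psi r α a < psi r α b := by
  intro a b ha hab _
  exact strictMonoOn_Ici_of_monotone_sub (monotone_psi_succ_sub r hα) h ha
    (ha.trans hab.le) hab

/-- if `ψ_j(α) < ψ_{j+1}(α)` for some `j` with `j+1 ≤ r`, then the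
sequence `ψ_j(α) < ψ_{j+1}(α) < … < ψ_r(α)` is strictly increasing from `j` on. -/
theorem psi_strict_from (r : ℕ) (α : ℕ → ℝ) (hα : ∀ i, 0 ≤ α i)
    (j : ℕ) (hj : j + 1 ≤ r) (h : psi r α j < psi r α (j + 1)) :
    ∀ a b : ℕ, j ≤ a → a < b → b ≤ r → psi r α a < psi r α b :=
  psi_strict_from_general r α hα j h
end

section
/- The function P_{r,𝔭}(Y) = Π_{i=0}^r p_i^{f_i(Y)} · Π_{i=0}^r (1-p_i)^{e_i(Y)} is a probability function on Ω_n^r, i.e., Σ_{Y ∈ Ω_n^r} P_{r,𝔭}(Y) = 1. -/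
open Finset Classical

attribute [local instance] Classical.propDecidable

/-- `Y` is a simplicial subcomplex of the simplex `Δ_n` on vertex set `Fin n`:
faces are nonempty vertex sets, closed under passing to nonempty subsets. -/
def IsComplex {n : ℕ} (Y : Finset (Finset (Fin n))) : Prop :=
  ∀ σ ∈ Y, σ.Nonempty ∧ ∀ τ ⊆ σ, τ.Nonempty → τ ∈ Y

/-- `f_i(Y)`: the number of `i`-dimensional faces of `Y`. -/
def fcount {n : ℕ} (Y : Finset (Finset (Fin n))) (i : ℕ) : ℕ :=
  (Y.filter fun σ => σ.card = i + 1).card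

/-- `σ` is an external face of `Y`: `σ ⊄ Y` but `∂σ ⊂ Y`. -/
def IsExternal {n : ℕ} (Y : Finset (Finset (Fin n))) (σ : Finset (Fin n)) : Prop :=
  σ.Nonempty ∧ σ ∉ Y ∧ ∀ τ ⊂ σ, τ.Nonempty → τ ∈ Y

/-- `e_i(Y)`: the number of `i`-dimensional external faces of `Y`. -/
noncomputable def ecount {n : ℕ} (Y : Finset (Finset (Fin n))) (i : ℕ) : ℕ :=
  (Finset.univ.filter fun σ : Finset (Fin n) =>
    σ.card = i + 1 ∧ IsExternal Y σ).card

/-- `P_{r,𝔭}(Y) = Π_{i≤r} p_i^{f_i(Y)} (1-p_i)^{e_i(Y)}` (with `0^0 = 1`). -/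
noncomputable def Pfun {n : ℕ} (r : ℕ) (p : ℕ → ℝ) (Y : Finset (Finset (Fin n))) : ℝ :=
  (∏ i ∈ Finset.range (r + 1), p i ^ fcount Y i) *
    ∏ i ∈ Finset.range (r + 1), (1 - p i) ^ ecount Y i

/-- `Ω_n^r`: the collection of all subcomplexes of `Δ_n` of dimension `≤ r`. -/
noncomputable def Omega (n r : ℕ) : Finset (Finset (Finset (Fin n))) :=
  Finset.univ.filter fun Y => IsComplex Y ∧ ∀ σ ∈ Y, σ.card ≤ r + 1

/-!
Induct on the largest number `k` of vertices of a face. A complex whose faces have at most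
`k + 1` vertices is exactly `Z ∪ T`, where `Z` is a complex with faces of at most `k` vertices
and `T` is any subset of the set `A` of `(k + 1)`-vertex simplices whose boundary lies in `Z`.
Adding `T` changes neither the lower-dimensional faces nor the lower-dimensional external faces;
the new faces are `T` and the new external faces are `A \ T`. So the weight of `Z ∪ T` is that
of `Z` times `p_k ^ |T| (1 - p_k) ^ (|A| - |T|)`, and summing over `T ⊆ A` contributes the
factor `(p_k + (1 - p_k)) ^ |A| = 1`.
-/

open Finset

/-- Indexed by the number of vertices `k` rather than the dimension, so that the induction starts
from the empty complex at `k = 0`; `Omega n r = complexesUpTo n (r + 1)`. -/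
noncomputable def complexesUpTo (n k : ℕ) : Finset (Finset (Finset (Fin n))) :=
  univ.filter fun Y => IsComplex Y ∧ ∀ σ ∈ Y, σ.card ≤ k

/-- `Pfun r = truncatedWeight (r + 1)`. -/
noncomputable def truncatedWeight {n : ℕ} (k : ℕ) (p : ℕ → ℝ) (Y : Finset (Finset (Fin n))) :
    ℝ :=
  ∏ i ∈ range k, p i ^ fcount Y i * (1 - p i) ^ ecount Y i

noncomputable def addableFaces {n : ℕ} (k : ℕ) (Z : Finset (Finset (Fin n))) :
    Finset (Finset (Fin n)) :=
  univ.filter fun σ => σ.card = k + 1 ∧ ∀ τ ⊂ σ, τ.Nonempty → τ ∈ Z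

section

variable {n k : ℕ} {Y Z T : Finset (Finset (Fin n))} {σ : Finset (Fin n)}

theorem mem_complexesUpTo : Y ∈ complexesUpTo n k ↔ IsComplex Y ∧ ∀ σ ∈ Y, σ.card ≤ k := by
  simp [complexesUpTo]

theorem mem_addableFaces :
    σ ∈ addableFaces k Z ↔ σ.card = k + 1 ∧ ∀ τ ⊂ σ, τ.Nonempty → τ ∈ Z := by
  simp [addableFaces]

theorem card_of_mem_addableFaces (hσ : σ ∈ addableFaces k Z) : σ.card = k + 1 :=
  (mem_addableFaces.mp hσ).1

theorem complexesUpTo_zero : complexesUpTo n 0 = {∅} := by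
  ext Y
  simp only [mem_complexesUpTo, mem_singleton]
  constructor
  · rintro ⟨hY, hcard⟩
    refine eq_empty_of_forall_notMem fun σ hσ => ?_
    have := (hY σ hσ).1.card_pos
    have := hcard σ hσ
    omega
  · rintro rfl
    simp [IsComplex]

theorem filter_card_le_union (hZ : ∀ σ ∈ Z, σ.card ≤ k) (hT : ∀ σ ∈ T, σ.card = k + 1) :
    (Z ∪ T).filter (·.card ≤ k) = Z := by
  rw [filter_union, filter_true_of_mem hZ, filter_false_of_mem fun σ hσ => by simp [hT σ hσ],
    union_empty]

theorem filter_card_eq_union (hZ : ∀ σ ∈ Z, σ.card ≤ k) (hT : ∀ σ ∈ T, σ.card = k + 1) :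
    (Z ∪ T).filter (·.card = k + 1) = T := by
  rw [filter_union, filter_true_of_mem hT, filter_false_of_mem fun σ hσ => by grind,
    empty_union]

theorem union_mem_complexesUpTo_succ (hZ : Z ∈ complexesUpTo n k)
    (hT : T ⊆ addableFaces k Z) : Z ∪ T ∈ complexesUpTo n (k + 1) := by
  obtain ⟨hZc, hZk⟩ := mem_complexesUpTo.mp hZ
  refine mem_complexesUpTo.mpr ⟨fun σ hσ => ?_, fun σ hσ => ?_⟩
  · rcases mem_union.mp hσ with hσ | hσ
    · exact ⟨(hZc σ hσ).1, fun τ hτ hne => mem_union_left _ ((hZc σ hσ).2 τ hτ hne)⟩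
    · obtain ⟨hcard, hbd⟩ := mem_addableFaces.mp (hT hσ)
      refine ⟨card_pos.mp (by omega), fun τ hτ hne => ?_⟩
      rcases hτ.eq_or_ssubset with rfl | hτ
      · exact mem_union_right _ hσ
      · exact mem_union_left _ (hbd τ hτ hne)
  · rcases mem_union.mp hσ with hσ | hσ
    · exact (hZk σ hσ).trans k.le_succ
    · exact (card_of_mem_addableFaces (hT hσ)).le

theorem filter_card_le_mem_complexesUpTo (hY : Y ∈ complexesUpTo n (k + 1)) :
    Y.filter (·.card ≤ k) ∈ complexesUpTo n k := by
  have hYc := (mem_complexesUpTo.mp hY).1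
  refine mem_complexesUpTo.mpr ⟨fun σ hσ => ?_, fun σ hσ => (mem_filter.mp hσ).2⟩
  obtain ⟨hσY, hσk⟩ := mem_filter.mp hσ
  exact ⟨(hYc σ hσY).1, fun τ hτ hne =>
    mem_filter.mpr ⟨(hYc σ hσY).2 τ hτ hne, (card_le_card hτ).trans hσk⟩⟩

theorem filter_card_eq_subset_addableFaces (hY : IsComplex Y) :
    Y.filter (·.card = k + 1) ⊆ addableFaces k (Y.filter (·.card ≤ k)) := by
  intro σ hσ
  obtain ⟨hσY, hσk⟩ := mem_filter.mp hσ
  refine mem_addableFaces.mpr ⟨hσk, fun τ hτ hne => mem_filter.mpr ⟨?_, ?_⟩⟩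
  · exact (hY σ hσY).2 τ hτ.subset hne
  · have := card_lt_card hτ
    omega

theorem filter_card_le_union_filter_card_eq (hY : ∀ σ ∈ Y, σ.card ≤ k + 1) :
    Y.filter (·.card ≤ k) ∪ Y.filter (·.card = k + 1) = Y := by
  rw [← filter_or, filter_true_of_mem fun σ hσ => by grind]

theorem sum_complexesUpTo_succ {M : Type*} [AddCommMonoid M]
    (f : Finset (Finset (Fin n)) → M) :
    ∑ Y ∈ complexesUpTo n (k + 1), f Y =
      ∑ Z ∈ complexesUpTo n k, ∑ T ∈ (addableFaces k Z).powerset, f (Z ∪ T) := by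
  rw [sum_sigma']
  refine sum_nbij' (fun Y => ⟨Y.filter (·.card ≤ k), Y.filter (·.card = k + 1)⟩)
    (fun x => x.1 ∪ x.2) (fun Y hY => ?_) (fun x hx => ?_) (fun Y hY => ?_) (fun x hx => ?_)
    (fun Y hY => ?_)
  · exact mem_sigma.mpr ⟨filter_card_le_mem_complexesUpTo hY,
      mem_powerset.mpr (filter_card_eq_subset_addableFaces (mem_complexesUpTo.mp hY).1)⟩
  · obtain ⟨hZ, hT⟩ := mem_sigma.mp hx
    exact union_mem_complexesUpTo_succ hZ (mem_powerset.mp hT)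
  · exact filter_card_le_union_filter_card_eq (mem_complexesUpTo.mp hY).2
  · obtain ⟨hZ, hT⟩ := mem_sigma.mp hx
    have hZk := (mem_complexesUpTo.mp hZ).2
    have hTk : ∀ σ ∈ x.2, σ.card = k + 1 := fun σ hσ =>
      card_of_mem_addableFaces (mem_powerset.mp hT hσ)
    exact Sigma.ext (filter_card_le_union hZk hTk) (heq_of_eq (filter_card_eq_union hZk hTk))
  · rw [filter_card_le_union_filter_card_eq (mem_complexesUpTo.mp hY).2]

theorem fcount_union_of_ne (hT : ∀ σ ∈ T, σ.card = k + 1) {i : ℕ} (hi : i ≠ k) :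
    fcount (Z ∪ T) i = fcount Z i := by
  rw [fcount, fcount, filter_union, filter_false_of_mem (s := T) fun σ hσ => by grind,
    union_empty]

theorem fcount_union_self (hZ : ∀ σ ∈ Z, σ.card ≤ k) (hT : ∀ σ ∈ T, σ.card = k + 1) :
    fcount (Z ∪ T) k = T.card := by
  rw [fcount, filter_card_eq_union hZ hT]

theorem isExternal_union_iff (hT : ∀ τ ∈ T, σ.card < τ.card) :
    IsExternal (Z ∪ T) σ ↔ IsExternal Z σ := by
  have hσT : σ ∉ T := fun h => (hT σ h).false
  have hsub : ∀ τ ⊂ σ, τ ∉ T := fun τ hτ h => (card_lt_card hτ).not_gt (hT τ h)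
  simp only [IsExternal, mem_union, hσT, or_false]
  grind

theorem ecount_union_of_lt (hT : ∀ σ ∈ T, σ.card = k + 1) {i : ℕ} (hi : i < k) :
    ecount (Z ∪ T) i = ecount Z i := by
  refine congrArg card (filter_congr fun σ _ => and_congr_right fun hσ => ?_)
  exact isExternal_union_iff fun τ hτ => by rw [hT τ hτ]; omega

theorem ecount_union_self (hZ : ∀ σ ∈ Z, σ.card ≤ k) (hT : T ⊆ addableFaces k Z) :
    ecount (Z ∪ T) k = (addableFaces k Z).card - T.card := by
  rw [ecount, ← card_sdiff_of_subset hT]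
  congr 1
  ext σ
  simp only [mem_filter, mem_univ, true_and, mem_sdiff, mem_addableFaces, IsExternal, mem_union]
  constructor
  · rintro ⟨hσ, -, hσZT, hbd⟩
    refine ⟨⟨hσ, fun τ hτ hne => (hbd τ hτ hne).resolve_right fun hτT => ?_⟩, hσZT ∘ Or.inr⟩
    have := card_lt_card hτ
    have := card_of_mem_addableFaces (hT hτT)
    omega
  · rintro ⟨⟨hσ, hbd⟩, hσT⟩
    refine ⟨hσ, card_pos.mp (by omega), fun hσZT => ?_, fun τ hτ hne => Or.inl (hbd τ hτ hne)⟩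
    rcases hσZT with hσZ | hσT'
    · have := hZ σ hσZ
      omega
    · exact hσT hσT'

theorem truncatedWeight_union (p : ℕ → ℝ) (hZ : ∀ σ ∈ Z, σ.card ≤ k)
    (hT : T ⊆ addableFaces k Z) :
    truncatedWeight (k + 1) p (Z ∪ T) =
      truncatedWeight k p Z *
        (p k ^ T.card * (1 - p k) ^ ((addableFaces k Z).card - T.card)) := by
  have hTk : ∀ σ ∈ T, σ.card = k + 1 := fun σ hσ => card_of_mem_addableFaces (hT hσ)
  rw [truncatedWeight, prod_range_succ, fcount_union_self hZ hTk, ecount_union_self hZ hT]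
  congr 1
  refine prod_congr rfl fun i hi => ?_
  have hi : i < k := mem_range.mp hi
  rw [fcount_union_of_ne hTk hi.ne, ecount_union_of_lt hTk hi]

end

theorem sum_truncatedWeight_eq_one (n k : ℕ) (p : ℕ → ℝ) :
    ∑ Y ∈ complexesUpTo n k, truncatedWeight k p Y = 1 := by
  induction k with
  | zero => simp [complexesUpTo_zero, truncatedWeight]
  | succ k ih =>
    calc ∑ Y ∈ complexesUpTo n (k + 1), truncatedWeight (k + 1) p Y
        = ∑ Z ∈ complexesUpTo n k,
            truncatedWeight k p Z * (p k + (1 - p k)) ^ (addableFaces k Z).card := by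
          rw [sum_complexesUpTo_succ]
          refine sum_congr rfl fun Z hZ => ?_
          rw [← sum_pow_mul_eq_add_pow, mul_sum]
          exact sum_congr rfl fun T hT =>
            truncatedWeight_union p (mem_complexesUpTo.mp hZ).2 (mem_powerset.mp hT)
      _ = 1 := by simpa using ih

theorem Pfun_sum_eq_one_general (n r : ℕ) (p : ℕ → ℝ) :
    ∑ Y ∈ Omega n r, Pfun r p Y = 1 := by
  have hP : ∀ Y : Finset (Finset (Fin n)), Pfun r p Y = truncatedWeight (r + 1) p Y :=
    fun Y => prod_mul_distrib.symm
  simp only [hP]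
  exact sum_truncatedWeight_eq_one n (r + 1) p

/-- `P_{r,𝔭}` is a probability function on `Ω_n^r`:
`Σ_{Y ∈ Ω_n^r} P_{r,𝔭}(Y) = 1`. -/
theorem Pfun_sum_eq_one (n r : ℕ) (p : ℕ → ℝ)
    (hp : ∀ i, i ≤ r → 0 ≤ p i ∧ p i ≤ 1) :
    ∑ Y ∈ Omega n r, Pfun r p Y = 1 :=
  Pfun_sum_eq_one_general n r p
end
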